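/- arXiv:2306.03628 — 2 statements merged into one kernel-verified Lean document; each statement's English description precedes it below -/
import Mathlib

section
/- Every weighted linear indexed grammar is weakly equivalent to a bottom-up weighted linear indexed grammar, i.e., one in which every production either pushes exactly one stack symbol onto the distinguished child's stack (X[∘β] → Ψ X'[∘A] Ψ') or is terminal (X[β] → a), and all other nonterminals on right-hand sides carry the empty stack [ ]. -/
open scoped BigOperators

namespace CtrlForm

/-- Sentential forms: nonterminals carrying a stack (top at the right of the
list), and terminals. -/
abbrev SForm (N T Γ : Type) := List ((N × List Γ) ⊕ T)

/-- Productions of a (weighted) linear indexed grammar: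
`rw X β Ψ X' β' Ψ'` is the production `X[∘β] → Ψ X'[∘β'] Ψ'`, where `X'` is
the distinguished child inheriting the rest of the stack, and
`term X β a` is the production `X[β] → a` with `a ∈ Σ ∪ {ε}`. -/
inductive LIGProd (N T Γ : Type) where
  | rw (X : N) (β : List Γ) (Ψ : SForm N T Γ) (X' : N) (β' : List Γ) (Ψ' : SForm N T Γ)
  | term (X : N) (β : List Γ) (a : Option T)

/-- A weighted linear indexed grammar (WLIG) over a weight type `A`. -/
structure WLIG (N T Γ A : Type) where
  prods : List (LIGProd N T Γ)
  start : N
  initStack : List Γ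
  wt : LIGProd N T Γ → A

namespace WLIG

variable {N T Γ A : Type}

/-- A single derivation step of a WLIG. -/
inductive Step (G : WLIG N T Γ A) : SForm N T Γ → SForm N T Γ → Prop where
  | rw (pre post : SForm N T Γ) (σ : List Γ) {X : N} {β : List Γ} {Ψ : SForm N T Γ}
      {X' : N} {β' : List Γ} {Ψ' : SForm N T Γ}
      (hp : LIGProd.rw X β Ψ X' β' Ψ' ∈ G.prods) :
      Step G (pre ++ [Sum.inl (X, σ ++ β)] ++ post)
        (pre ++ Ψ ++ [Sum.inl (X', σ ++ β')] ++ Ψ' ++ post)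
  | term (pre post : SForm N T Γ) {X : N} {β : List Γ} {a : Option T}
      (hp : LIGProd.term X β a ∈ G.prods) :
      Step G (pre ++ [Sum.inl (X, β)] ++ post)
        (pre ++ a.toList.map Sum.inr ++ post)

/-- The derivation relation of a WLIG. -/
def Derives (G : WLIG N T Γ A) : SForm N T Γ → SForm N T Γ → Prop :=
  Relation.ReflTransGen G.Step

/-- The string language of a WLIG (weights ignored). -/
def language (G : WLIG N T Γ A) : Set (List T) :=
  { w | G.Derives [Sum.inl (G.start, G.initStack)] (w.map Sum.inr) }

/-- Every nonterminal occurring in the sentential form `Ψ` carries the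
stack `[S]`. -/
def AuxTD (S : Γ) (Ψ : SForm N T Γ) : Prop :=
  ∀ x ∈ Ψ, ∀ Y : N, ∀ σ : List Γ, x = Sum.inl (Y, σ) → σ = [S]

/-- A WLIG is top-down if every production either pops exactly one stack
symbol from the distinguished nonterminal's stack (`X[∘A] → Ψ X'[∘β] Ψ'`)
or is terminal with singleton stack (`X[A] → a`), all auxiliary
nonterminals carry the initial stack `[S]`, and the initial stack is `[S]`. -/
def IsTopDown (G : WLIG N T Γ A) : Prop :=
  ∃ S : Γ, G.initStack = [S] ∧
    ∀ p ∈ G.prods,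
      (∃ X A' Ψ X' β Ψ', p = LIGProd.rw X [A'] Ψ X' β Ψ' ∧ AuxTD S Ψ ∧ AuxTD S Ψ') ∨
      (∃ X A' a, p = LIGProd.term X [A'] a)

end WLIG

namespace WLIG

/-- Every nonterminal occurring in `Ψ` carries the empty stack. -/
def AuxBU {N T Γ : Type} (Ψ : SForm N T Γ) : Prop :=
  ∀ x ∈ Ψ, ∀ Y : N, ∀ σ : List Γ, x = Sum.inl (Y, σ) → σ = []

/-- A WLIG is bottom-up if every production either pushes exactly one stack
symbol onto the distinguished child's stack (`X[∘β] → Ψ X'[∘A] Ψ'`) or is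
terminal (`X[β] → a`), all auxiliary nonterminals carry the empty stack,
and the initial stack is empty. -/
def IsBottomUp {N T Γ A : Type} (G : WLIG N T Γ A) : Prop :=
  G.initStack = [] ∧
    ∀ p ∈ G.prods,
      (∃ X β Ψ X' A' Ψ', p = LIGProd.rw X β Ψ X' [A'] Ψ' ∧ AuxBU Ψ ∧ AuxBU Ψ') ∨
      (∃ X β a, p = LIGProd.term X β a)

end WLIG

/-!
A stack `σ` is encoded as `σ.map some ++ [none]`: the marker `none` on top makes the encoding of
every stack nonempty, so each production can push exactly one symbol. A production
`X[∘β] → Ψ X'[∘β'] Ψ'` becomes `⟨X, []⟩[∘enc β] → Ψ̂ ⟨X', L⟩[∘c] Ψ̂'` with `c :: L = enc β'`,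
where a nonterminal `⟨Y, L⟩` still has to push `L`, one symbol per production
`⟨Y, c :: L⟩[∘] → ⟨Y, L⟩[∘c]`, and `Ψ̂` replaces each `Y[σ]` in `Ψ` by `⟨Y, enc σ⟩[ ]`.
Every derivation of `G` is simulated this way. Conversely, reading `⟨Y, L⟩[τ]` as `Y` with
stack `τ ++ L` and the `none`s erased turns every step of the new grammar into at most one step
of `G`, with no invariant on the shape of the stacks needed.
-/

namespace WLIG

variable {N T Γ A : Type} {G : WLIG N T Γ A}

theorem Derives.refl {x : SForm N T Γ} : G.Derives x x := Relation.ReflTransGen.refl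

theorem Derives.single {x y : SForm N T Γ} (h : G.Step x y) : G.Derives x y :=
  Relation.ReflTransGen.single h

theorem Derives.head {x y z : SForm N T Γ} (hxy : G.Step x y) (hyz : G.Derives y z) :
    G.Derives x z :=
  Relation.ReflTransGen.head hxy hyz

theorem Derives.trans {x y z : SForm N T Γ} (hxy : G.Derives x y) (hyz : G.Derives y z) :
    G.Derives x z :=
  Relation.ReflTransGen.trans hxy hyz

theorem Step.frame {x y : SForm N T Γ} (h : G.Step x y) (pre post : SForm N T Γ) :
    G.Step (pre ++ x ++ post) (pre ++ y ++ post) := by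
  cases h with
  | rw p q σ hp => simpa using Step.rw (G := G) (pre ++ p) (q ++ post) σ hp
  | term p q hp => simpa using Step.term (G := G) (pre ++ p) (q ++ post) hp

theorem Derives.frame {x y : SForm N T Γ} (h : G.Derives x y) (pre post : SForm N T Γ) :
    G.Derives (pre ++ x ++ post) (pre ++ y ++ post) := by
  induction h with
  | refl => exact .refl
  | tail _ hstep ih => exact ih.tail (hstep.frame pre post)

theorem Derives.append {a b c d : SForm N T Γ} (hab : G.Derives a b) (hcd : G.Derives c d) :
    G.Derives (a ++ c) (b ++ d) := by
  have hleft := hab.frame [] c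
  have hright := hcd.frame b []
  simp only [List.nil_append, List.append_nil] at hleft hright
  exact hleft.trans hright

end WLIG

namespace BottomUp

open WLIG

variable {N T Γ A : Type}

def enc (σ : List Γ) : List (Option Γ) := σ.map some ++ [none]

def encTail (σ : List Γ) : List (Option Γ) := (enc σ).tail

theorem enc_eq_cons (σ : List Γ) : enc σ = σ.head? :: encTail σ := by
  cases σ <;> rfl

theorem enc_append (σ β : List Γ) : enc (σ ++ β) = σ.map some ++ enc β := by
  simp [enc]

@[simp]
theorem reduceOption_map_some (σ : List Γ) : (σ.map some).reduceOption = σ := by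
  induction σ with
  | nil => rfl
  | cons a σ ih => simp [List.reduceOption_cons_of_some, ih]

@[simp]
theorem reduceOption_enc (σ : List Γ) : (enc σ).reduceOption = σ := by
  simp [enc, List.reduceOption_append]

abbrev Nonterm (N Γ : Type) := N × List (Option Γ)

abbrev Rule (N T Γ : Type) := LIGProd (Nonterm N Γ) T (Option Γ)

def encodeItem : (N × List Γ) ⊕ T → (Nonterm N Γ × List (Option Γ)) ⊕ T :=
  Sum.map (fun x => ((x.1, []), enc x.2)) id

def deferItem : (N × List Γ) ⊕ T → (Nonterm N Γ × List (Option Γ)) ⊕ T :=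
  Sum.map (fun x => ((x.1, enc x.2), [])) id

def decodeItem : (Nonterm N Γ × List (Option Γ)) ⊕ T → (N × List Γ) ⊕ T :=
  Sum.map (fun x => (x.1.1, (x.2 ++ x.1.2).reduceOption)) id

def encodeForm (Ψ : SForm N T Γ) : SForm (Nonterm N Γ) T (Option Γ) := Ψ.map encodeItem

def deferForm (Ψ : SForm N T Γ) : SForm (Nonterm N Γ) T (Option Γ) := Ψ.map deferItem

def decodeForm (Φ : SForm (Nonterm N Γ) T (Option Γ)) : SForm N T Γ := Φ.map decodeItem

@[simp]
theorem encodeForm_map_inr (w : List T) :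
    encodeForm (N := N) (Γ := Γ) (w.map .inr) = w.map .inr := by
  simp [encodeForm, encodeItem, Function.comp_def]

@[simp]
theorem decodeForm_map_inr (w : List T) :
    decodeForm (N := N) (Γ := Γ) (w.map .inr) = w.map .inr := by
  simp [decodeForm, decodeItem, Function.comp_def]

@[simp]
theorem decodeItem_deferItem (x : (N × List Γ) ⊕ T) : decodeItem (deferItem x) = x := by
  rcases x with ⟨Y, σ⟩ | a <;> simp [decodeItem, deferItem]

@[simp]
theorem decodeForm_deferForm (Ψ : SForm N T Γ) : decodeForm (deferForm Ψ) = Ψ := by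
  simp [decodeForm, deferForm, Function.comp_def]

def pushProd (Y : N) (c : Option Γ) (L : List (Option Γ)) : Rule N T Γ :=
  .rw (Y, c :: L) [] [] (Y, L) [c] []

def pushProds (Y : N) : List (Option Γ) → List (Rule N T Γ)
  | [] => []
  | c :: L => pushProd Y c L :: pushProds Y L

def deferProds (Ψ : SForm N T Γ) : List (Rule N T Γ) :=
  Ψ.flatMap (Sum.elim (fun x => pushProds x.1 (enc x.2)) fun _ => [])

def mainProd : LIGProd N T Γ → Rule N T Γ
  | .rw X β Ψ X' β' Ψ' =>
      .rw (X, []) (enc β) (deferForm Ψ) (X', encTail β') [β'.head?] (deferForm Ψ')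
  | .term X β a => .term (X, []) (enc β) a

def pushesOf : LIGProd N T Γ → List (Rule N T Γ)
  | .rw _ _ Ψ X' β' Ψ' => pushProds X' (encTail β') ++ deferProds Ψ ++ deferProds Ψ'
  | .term .. => []

/-- Weak equivalence does not see weights, so every production gets the same one. -/
def bottomUp (G : WLIG N T Γ A) : WLIG (Nonterm N Γ) T (Option Γ) A where
  prods := G.prods.map mainProd ++ G.prods.flatMap pushesOf ++
    deferProds [.inl (G.start, G.initStack)]
  start := (G.start, enc G.initStack)
  initStack := []
  wt := fun _ => G.wt (.term G.start [] none)

theorem exists_pushProd_of_mem_pushProds {Y : N} {L : List (Option Γ)} {p : Rule N T Γ}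
    (hp : p ∈ pushProds Y L) : ∃ c L', p = pushProd Y c L' := by
  induction L with
  | nil => simp [pushProds] at hp
  | cons c L ih =>
    rcases List.mem_cons.mp hp with rfl | hp
    · exact ⟨c, L, rfl⟩
    · exact ih hp

theorem exists_pushProd_of_mem_deferProds {Ψ : SForm N T Γ} {p : Rule N T Γ}
    (hp : p ∈ deferProds Ψ) : ∃ Y c L, p = pushProd Y c L := by
  obtain ⟨x, -, hx⟩ := List.mem_flatMap.mp hp
  rcases x with ⟨Y, σ⟩ | a
  · exact ⟨Y, exists_pushProd_of_mem_pushProds hx⟩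
  · simp at hx

theorem exists_pushProd_of_mem_pushesOf {r : LIGProd N T Γ} {p : Rule N T Γ}
    (hp : p ∈ pushesOf r) : ∃ Y c L, p = pushProd Y c L := by
  cases r with
  | rw X β Ψ X' β' Ψ' =>
    simp only [pushesOf, List.mem_append] at hp
    rcases hp with (hp | hp) | hp
    · exact ⟨X', exists_pushProd_of_mem_pushProds hp⟩
    · exact exists_pushProd_of_mem_deferProds hp
    · exact exists_pushProd_of_mem_deferProds hp
  | term => simp [pushesOf] at hp

variable {G : WLIG N T Γ A}

theorem mem_bottomUp_prods {p : Rule N T Γ} (hp : p ∈ (bottomUp G).prods) :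
    (∃ r ∈ G.prods, p = mainProd r) ∨ ∃ Y c L, p = pushProd Y c L := by
  simp only [bottomUp, List.mem_append, List.mem_map, List.mem_flatMap] at hp
  rcases hp with (⟨r, hr, rfl⟩ | ⟨r, -, hp⟩) | hp
  · exact .inl ⟨r, hr, rfl⟩
  · exact .inr (exists_pushProd_of_mem_pushesOf hp)
  · exact .inr (exists_pushProd_of_mem_deferProds hp)

theorem mainProd_mem_bottomUp {r : LIGProd N T Γ} (hr : r ∈ G.prods) :
    mainProd r ∈ (bottomUp G).prods := by
  simp only [bottomUp, List.mem_append, List.mem_map]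
  exact .inl (.inl ⟨r, hr, rfl⟩)

theorem pushesOf_subset_bottomUp {r : LIGProd N T Γ} (hr : r ∈ G.prods) :
    pushesOf r ⊆ (bottomUp G).prods := fun _ hp => by
  simp only [bottomUp, List.mem_append, List.mem_flatMap]
  exact .inl (.inr ⟨r, hr, hp⟩)

theorem auxBU_deferForm (Ψ : SForm N T Γ) : AuxBU (deferForm Ψ) := by
  intro x hx Y σ rfl
  obtain ⟨y, -, hy⟩ := List.mem_map.mp hx
  rcases y with ⟨Z, τ⟩ | a <;> simp_all [deferItem]

theorem isBottomUp_bottomUp (G : WLIG N T Γ A) : (bottomUp G).IsBottomUp := by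
  refine ⟨rfl, fun p hp => ?_⟩
  rcases mem_bottomUp_prods hp with ⟨r, -, rfl⟩ | ⟨Y, c, L, rfl⟩
  · cases r with
    | rw X β Ψ X' β' Ψ' =>
      exact .inl ⟨_, _, _, _, _, _, rfl, auxBU_deferForm Ψ, auxBU_deferForm Ψ'⟩
    | term X β a => exact .inr ⟨_, _, _, rfl⟩
  · exact .inl ⟨_, _, [], _, c, [], rfl, auxBU_deferForm [], auxBU_deferForm []⟩

theorem derives_of_pushProds_subset {G' : WLIG (Nonterm N Γ) T (Option Γ) A} {Y : N}
    {L : List (Option Γ)} (h : pushProds (T := T) Y L ⊆ G'.prods) (τ : List (Option Γ)) :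
    G'.Derives [.inl ((Y, L), τ)] [.inl ((Y, []), τ ++ L)] := by
  induction L generalizing τ with
  | nil => simpa using Derives.refl
  | cons c L ih =>
    have hpush : G'.Step [.inl ((Y, c :: L), τ)] [.inl ((Y, L), τ ++ [c])] := by
      simpa using Step.rw (G := G') [] [] τ (h List.mem_cons_self)
    simpa using Derives.head hpush
      (ih (fun _ hp => h (List.mem_cons_of_mem _ hp)) (τ ++ [c]))

theorem derives_of_deferProds_subset {G' : WLIG (Nonterm N Γ) T (Option Γ) A}
    {Ψ : SForm N T Γ} (h : deferProds Ψ ⊆ G'.prods) :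
    G'.Derives (deferForm Ψ) (encodeForm Ψ) := by
  induction Ψ with
  | nil => exact .refl
  | cons x Ψ ih =>
    simp only [deferProds, List.flatMap_cons, List.append_subset] at h
    have hx : G'.Derives [deferItem x] [encodeItem x] := by
      rcases x with ⟨Y, σ⟩ | a
      · simpa [deferItem, encodeItem] using derives_of_pushProds_subset h.1 []
      · exact .refl
    exact hx.append (ih h.2)

theorem encodeForm_derives_of_step {D D' : SForm N T Γ} (h : G.Step D D') :
    (bottomUp G).Derives (encodeForm D) (encodeForm D') := by
  cases h with
  | @rw pre post σ X β Ψ X' β' Ψ' hr =>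
    have hpushes := pushesOf_subset_bottomUp hr
    simp only [pushesOf, List.append_subset] at hpushes
    obtain ⟨⟨hpushX', hdeferΨ⟩, hdeferΨ'⟩ := hpushes
    have hmain : (bottomUp G).Step
        (encodeForm pre ++ [.inl ((X, []), σ.map some ++ enc β)] ++ encodeForm post)
        (encodeForm pre ++ deferForm Ψ ++ [.inl ((X', encTail β'), σ.map some ++ [β'.head?])] ++
          deferForm Ψ' ++ encodeForm post) :=
      Step.rw _ _ _ (mainProd_mem_bottomUp hr)
    have hpush := derives_of_pushProds_subset hpushX' (σ.map some ++ [β'.head?])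
    rw [List.append_assoc, List.singleton_append, ← enc_eq_cons, ← enc_append] at hpush
    have hrest := ((((Derives.refl (x := encodeForm pre)).append
      (derives_of_deferProds_subset hdeferΨ)).append hpush).append
      (derives_of_deferProds_subset hdeferΨ')).append (Derives.refl (x := encodeForm post))
    simp only [encodeForm, encodeItem, List.map_append] at hmain hrest ⊢
    simp only [List.map_cons, List.map_nil, Sum.map_inl, enc_append] at hrest ⊢
    exact Derives.head hmain hrest
  | @term pre post X β a hr =>
    have hmain := Step.term (G := bottomUp G) (encodeForm pre) (encodeForm post)
      (mainProd_mem_bottomUp (r := .term X β a) hr)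
    refine .single ?_
    cases a <;> simpa [encodeForm, encodeItem] using hmain

theorem encodeForm_derives {D D' : SForm N T Γ} (h : G.Derives D D') :
    (bottomUp G).Derives (encodeForm D) (encodeForm D') := by
  induction h with
  | refl => exact .refl
  | tail _ hstep ih => exact ih.trans (encodeForm_derives_of_step hstep)

theorem derives_decode_of_mem_rw {X : Nonterm N Γ} {β : List (Option Γ)}
    {Ψ : SForm (Nonterm N Γ) T (Option Γ)} {X' : Nonterm N Γ} {β' : List (Option Γ)}
    {Ψ' : SForm (Nonterm N Γ) T (Option Γ)} (hp : .rw X β Ψ X' β' Ψ' ∈ (bottomUp G).prods)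
    (σ : List (Option Γ)) :
    G.Derives [decodeItem (.inl (X, σ ++ β))]
      (decodeForm Ψ ++ [decodeItem (.inl (X', σ ++ β'))] ++ decodeForm Ψ') := by
  rcases mem_bottomUp_prods hp with ⟨r, hr, hpr⟩ | ⟨Y, c, L, hpush⟩
  · cases r with
    | rw X₀ β₀ Ψ₀ X₀' β₀' Ψ₀' =>
      simp only [mainProd, LIGProd.rw.injEq] at hpr
      obtain ⟨rfl, rfl, rfl, rfl, rfl, rfl⟩ := hpr
      have hstep := Step.rw (G := G) [] [] σ.reduceOption hr
      have hβ₀' : σ ++ [β₀'.head?] ++ encTail β₀' = σ ++ enc β₀' := by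
        rw [enc_eq_cons]; simp
      simp only [decodeItem, decodeForm_deferForm, Sum.map_inl, hβ₀']
      simpa [List.reduceOption_append] using Derives.single hstep
    | term => simp [mainProd] at hpr
  · simp only [pushProd, LIGProd.rw.injEq] at hpush
    obtain ⟨rfl, rfl, rfl, rfl, rfl, rfl⟩ := hpush
    simpa [decodeItem, decodeForm] using Derives.refl

theorem decodeForm_derives_of_step {Φ Φ' : SForm (Nonterm N Γ) T (Option Γ)}
    (h : (bottomUp G).Step Φ Φ') : G.Derives (decodeForm Φ) (decodeForm Φ') := by
  cases h with
  | rw pre post σ hp =>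
    simpa [decodeForm] using (derives_decode_of_mem_rw hp σ).frame (decodeForm pre)
      (decodeForm post)
  | @term pre post X β a hp =>
    rcases mem_bottomUp_prods hp with ⟨r, hr, hpr⟩ | ⟨Y, c, L, hpush⟩
    · cases r with
      | rw => simp [mainProd] at hpr
      | term X₀ β₀ a₀ =>
        simp only [mainProd, LIGProd.term.injEq] at hpr
        obtain ⟨rfl, rfl, rfl⟩ := hpr
        refine .single ?_
        simpa [decodeForm, decodeItem, Function.comp_def] using
          Step.term (decodeForm pre) (decodeForm post) hr
    · simp [pushProd] at hpush

theorem decodeForm_derives {Φ Φ' : SForm (Nonterm N Γ) T (Option Γ)}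
    (h : (bottomUp G).Derives Φ Φ') : G.Derives (decodeForm Φ) (decodeForm Φ') := by
  induction h with
  | refl => exact .refl
  | tail _ hstep ih => exact ih.trans (decodeForm_derives_of_step hstep)

theorem language_bottomUp (G : WLIG N T Γ A) : (bottomUp G).language = G.language := by
  have hstart : [.inl ((bottomUp G).start, (bottomUp G).initStack)] =
      deferForm (T := T) [.inl (G.start, G.initStack)] := rfl
  have hdefer : deferProds [.inl (G.start, G.initStack)] ⊆ (bottomUp G).prods :=
    fun _ hp => List.mem_append_right _ hp
  ext w
  constructor
  · intro h
    simpa [language, hstart] using decodeForm_derives h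
  · intro h
    simpa [language, hstart] using
      (derives_of_deferProds_subset hdefer).trans (encodeForm_derives h)

end BottomUp

theorem every_wlig_weakly_equivalent_to_bottomUp_general
    {N T Γ A : Type} (G : WLIG N T Γ A) :
    ∃ (N' Γ' : Type) (G' : WLIG N' T Γ' A), G'.IsBottomUp ∧ G'.language = G.language :=
  ⟨_, _, BottomUp.bottomUp G, BottomUp.isBottomUp_bottomUp G, BottomUp.language_bottomUp G⟩

/-- Every weighted linear indexed grammar is weakly equivalent to a
bottom-up weighted linear indexed grammar. -/
theorem every_wlig_weakly_equivalent_to_bottomUp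
    {N T Γ A : Type} [Semiring A] (G : WLIG N T Γ A) :
    ∃ (N' Γ' : Type) (G' : WLIG N' T Γ' A), G'.IsBottomUp ∧ G'.language = G.language :=
  every_wlig_weakly_equivalent_to_bottomUp_general G

end CtrlForm
end

section
/- Every top-down WEPDA is weakly equivalent to a binarized top-down WEPDA, all of whose transitions have one of the forms p, X[∘A] →^{a/w} q, Y[S], Z[∘β], ε; p, X[∘A] →^{a/w} q, ε, Y[∘β], Z[S]; p, X[∘A] →^{a/w} q, ε, Y[∘β], ε; or p, X[A] →^{a/w} q, ε, ε, ε, with |β| ≤ 2. -/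
/-!
A transition `p, X[∘β] →a q, Ψ, Y[∘β'], Ψ'` is simulated by a chain of binarized transitions
that all stay in state `q` after the first one. The first pops `β`, relabels the inner stack to
`Y` and leaves on top a marker `(Ψ, β', Ψ')` recording the pending work; the next ones insert the
inner stacks of `Ψ` below the top one by one and push the symbols of `β'` one by one, updating
the marker; the last ones open a temporary inner stack above, whose label records `Ψ'`, insert
the inner stacks of `Ψ'` below it, and pop it. Hence every run of the automaton lifts.

Conversely, reading a marker or a temporary label as the inner stacks it stands for decodes a
configuration of the binarized automaton into one of the original automaton. Along runs markers
only occur as top symbols of inner stacks, and on such configurations every transition of a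
chain except the first leaves the decoding unchanged, while the first acts on it as the
simulated transition does. This needs the simulated transition to pop a nonempty word, so that
the first transition of a chain never fires on a marker.
-/

open scoped BigOperators

namespace CtrlForm

/-- Transitions of a weighted embedded pushdown automaton:
`repl p X β a q Ψ Y β' Ψ'` is the transition
`p, X[∘β] →^a q, Ψ, Y[∘β'], Ψ'` (replace the top `β` of the top inner
stack by `β'`, relabel `X` to `Y`, insert the inner stacks `Ψ` below and
`Ψ'` above the top inner stack), and `popT p X β a q` is the transition
`p, X[β] →^a q, ε, ε, ε` popping the entire top inner stack. -/
inductive ETrans (Q N T Γ : Type) where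
  | repl (p : Q) (X : N) (β : List Γ) (a : Option T) (q : Q)
      (Ψ : List (N × List Γ)) (Y : N) (β' : List Γ) (Ψ' : List (N × List Γ))
  | popT (p : Q) (X : N) (β : List Γ) (a : Option T) (q : Q)

/-- A weighted embedded pushdown automaton over a weight type `A`.
Configurations consist of a state and an outer stack of labeled inner
stacks (tops at the right of the lists). -/
structure WEPDA (Q N T Γ A : Type) where
  trans : List (ETrans Q N T Γ)
  wt : ETrans Q N T Γ → A
  qInit : Q
  stackInit : List (N × List Γ)
  qFin : Q
  stackFin : List (N × List Γ)

namespace WEPDA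

variable {Q N T Γ A : Type}

/-- Runs of a WEPDA from a configuration to a configuration, scanning a
string; represented as data so that they carry weights. -/
inductive Run (M : WEPDA Q N T Γ A) :
    Q × List (N × List Γ) → Q × List (N × List Γ) → List T → Type where
  | refl (c : Q × List (N × List Γ)) : Run M c c []
  | repl (Φ : List (N × List Γ)) (σ : List Γ) (p : Q) (X : N) (β : List Γ)
      (a : Option T) (q : Q) (Ψ : List (N × List Γ)) (Y : N) (β' : List Γ)
      (Ψ' : List (N × List Γ)) {c : Q × List (N × List Γ)} {w : List T}
      (ht : ETrans.repl p X β a q Ψ Y β' Ψ' ∈ M.trans)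
      (r : Run M (q, Φ ++ Ψ ++ [(Y, σ ++ β')] ++ Ψ') c w) :
      Run M (p, Φ ++ [(X, σ ++ β)]) c (a.toList ++ w)
  | popT (Φ : List (N × List Γ)) (p : Q) (X : N) (β : List Γ) (a : Option T) (q : Q)
      {c : Q × List (N × List Γ)} {w : List T}
      (ht : ETrans.popT p X β a q ∈ M.trans)
      (r : Run M (q, Φ) c w) :
      Run M (p, Φ ++ [(X, β)]) c (a.toList ++ w)

/-- The string language of a WEPDA: all strings scanned by accepting runs. -/
def language (M : WEPDA Q N T Γ A) : Set (List T) :=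
  { w | Nonempty (Run M (M.qInit, M.stackInit) (M.qFin, M.stackFin) w) }

/-- A WEPDA is top-down (with distinguished stack symbol `S` and initial
inner-stack label `S₀`) if every transition pops exactly one symbol from
the top inner stack or pops a singleton top inner stack entirely, all
auxiliary inner stacks contain only the symbol `S`, the initial
configuration is `(q_init, S₀[S])`, and the final configuration is
`(q_f, ε)`. -/
def IsTopDown (M : WEPDA Q N T Γ A) : Prop :=
  ∃ (S : Γ) (S₀ : N),
    M.stackInit = [(S₀, [S])] ∧ M.stackFin = [] ∧
    ∀ t ∈ M.trans,
      (∃ p X A' a q Ψ Y β Ψ',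
        t = ETrans.repl p X [A'] a q Ψ Y β Ψ' ∧
        (∀ x ∈ Ψ, (x : N × List Γ).2 = [S]) ∧ (∀ x ∈ Ψ', (x : N × List Γ).2 = [S])) ∨
      (∃ p X A' a q, t = ETrans.popT p X [A'] a q)

end WEPDA

namespace WEPDA

/-- A top-down WEPDA is binarized if all its transitions have one of the
forms `p, X[∘A] →^a q, Y[S], Z[∘β], ε`; `p, X[∘A] →^a q, ε, Y[∘β], Z[S]`;
`p, X[∘A] →^a q, ε, Y[∘β], ε`; or `p, X[A] →^a q, ε, ε, ε`, with `|β| ≤ 2`. -/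
def IsBinarizedTopDown {Q N T Γ A : Type} (S : Γ) (S₀ : N) (M : WEPDA Q N T Γ A) : Prop :=
  M.stackInit = [(S₀, [S])] ∧ M.stackFin = [] ∧
  ∀ t ∈ M.trans,
    (∃ p X A' a q Y Z β, β.length ≤ 2 ∧
      t = ETrans.repl p X [A'] a q [(Y, [S])] Z β []) ∨
    (∃ p X A' a q Y Z β, β.length ≤ 2 ∧
      t = ETrans.repl p X [A'] a q [] Y β [(Z, [S])]) ∨
    (∃ p X A' a q Y β, β.length ≤ 2 ∧
      t = ETrans.repl p X [A'] a q [] Y β []) ∨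
    (∃ p X A' a q, t = ETrans.popT p X [A'] a q)

/-- A top-down WEPDA is in normal form if all its transitions have one of
the seven listed types. -/
def IsNormalForm {Q N T Γ A : Type} (S : Γ) (S₀ : N) (M : WEPDA Q N T Γ A) : Prop :=
  M.stackInit = [(S₀, [S])] ∧ M.stackFin = [] ∧
  ∀ t ∈ M.trans,
    (∃ p X A' a q Y Z β, β.length ≤ 2 ∧
      t = ETrans.repl p X [A'] a q [(Y, [S])] Z β []) ∨
    (∃ p X A' a q Y Z β, β.length ≤ 2 ∧
      t = ETrans.repl p X [A'] a q [] Y β [(Z, [S])]) ∨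
    (∃ p X A' a q Y B C, t = ETrans.repl p X [A'] a q [] Y [B, C] []) ∨
    (∃ p X A' c q Y B, t = ETrans.repl p X [A'] (some c) q [] Y [B] []) ∨
    (∃ p X A' c q Y, t = ETrans.repl p X [A'] (some c) q [] Y [] []) ∨
    (∃ p X A' c q, t = ETrans.popT p X [A'] (some c) q) ∨
    (∃ p a q, t = ETrans.popT p S₀ [S] a q)

end WEPDA

namespace ETrans

variable {Q N T Γ : Type}

inductive Fires : ETrans Q N T Γ → Q × List (N × List Γ) → Option T →
    Q × List (N × List Γ) → Prop
  | repl (Φ : List (N × List Γ)) (σ : List Γ) (p : Q) (X : N) (β : List Γ) (a : Option T)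
      (q : Q) (Ψ : List (N × List Γ)) (Y : N) (β' : List Γ) (Ψ' : List (N × List Γ)) :
      Fires (repl p X β a q Ψ Y β' Ψ') (p, Φ ++ [(X, σ ++ β)]) a
        (q, Φ ++ Ψ ++ [(Y, σ ++ β')] ++ Ψ')
  | popT (Φ : List (N × List Γ)) (p : Q) (X : N) (β : List Γ) (a : Option T) (q : Q) :
      Fires (popT p X β a q) (p, Φ ++ [(X, β)]) a (q, Φ)

def PopsNonempty : ETrans Q N T Γ → Prop
  | repl _ _ β _ _ _ _ _ _ => β ≠ []
  | popT .. => True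

def IsTopDown (S : Γ) (t : ETrans Q N T Γ) : Prop :=
  (∃ p X A' a q Ψ Y β Ψ',
    t = ETrans.repl p X [A'] a q Ψ Y β Ψ' ∧
    (∀ x ∈ Ψ, (x : N × List Γ).2 = [S]) ∧ (∀ x ∈ Ψ', (x : N × List Γ).2 = [S])) ∨
  (∃ p X A' a q, t = ETrans.popT p X [A'] a q)

def IsBinarized (S : Γ) (t : ETrans Q N T Γ) : Prop :=
  (∃ p X A' a q Y Z β, β.length ≤ 2 ∧
    t = ETrans.repl p X [A'] a q [(Y, [S])] Z β []) ∨
  (∃ p X A' a q Y Z β, β.length ≤ 2 ∧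
    t = ETrans.repl p X [A'] a q [] Y β [(Z, [S])]) ∨
  (∃ p X A' a q Y β, β.length ≤ 2 ∧
    t = ETrans.repl p X [A'] a q [] Y β []) ∨
  (∃ p X A' a q, t = ETrans.popT p X [A'] a q)

theorem IsTopDown.popsNonempty {S : Γ} {t : ETrans Q N T Γ} (h : t.IsTopDown S) :
    t.PopsNonempty := by
  rcases h with ⟨_, _, _, _, _, _, _, _, _, rfl, -⟩ | ⟨_, _, _, _, _, rfl⟩ <;>
    simp [PopsNonempty]

end ETrans

namespace WEPDA

variable {Q N T Γ A : Type}

def Reaches (M : WEPDA Q N T Γ A) (c d : Q × List (N × List Γ)) (w : List T) : Prop :=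
  Nonempty (Run M c d w)

namespace Reaches

variable {M : WEPDA Q N T Γ A}

theorem refl (c : Q × List (N × List Γ)) : M.Reaches c c [] := ⟨Run.refl c⟩

theorem head {t : ETrans Q N T Γ} {c c' d : Q × List (N × List Γ)} {a : Option T} {w : List T}
    (ht : t ∈ M.trans) (hf : t.Fires c a c') (h : M.Reaches c' d w) :
    M.Reaches c d (a.toList ++ w) := by
  obtain ⟨r⟩ := h
  cases hf with
  | repl Φ σ p X β a q Ψ Y β' Ψ' => exact ⟨Run.repl Φ σ p X β a q Ψ Y β' Ψ' ht r⟩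
  | popT Φ p X β a q => exact ⟨Run.popT Φ p X β a q ht r⟩

theorem head_induction_on {d : Q × List (N × List Γ)}
    {P : Q × List (N × List Γ) → List T → Prop} {c : Q × List (N × List Γ)} {w : List T}
    (h : M.Reaches c d w) (refl : P d [])
    (head : ∀ t ∈ M.trans, ∀ {c a c' w}, t.Fires c a c' → P c' w → P c (a.toList ++ w)) :
    P c w := by
  obtain ⟨r⟩ := h
  induction r with
  | refl => exact refl
  | repl Φ σ p X β a q Ψ Y β' Ψ' ht _ ih =>
      exact head _ ht (ETrans.Fires.repl Φ σ p X β a q Ψ Y β' Ψ') (ih refl)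
  | popT Φ p X β a q ht _ ih => exact head _ ht (ETrans.Fires.popT Φ p X β a q) (ih refl)

end Reaches

end WEPDA

namespace Binarize

open WEPDA

variable {Q N T Γ A : Type}

/-- A marker `(Ψr, βr, Ψ')` on top of an inner stack `Y[σ]` stands for the inner stacks
`Ψr, Y[σ βr], Ψ'` that the simulated transition still has to produce. -/
abbrev Marker (N Γ : Type) : Type := List (N × List Γ) × List Γ × List (N × List Γ)

/-- `Sum.inr Ψr` labels a temporary top inner stack, standing for the inner stacks `Ψr`. -/
abbrev Label (N Γ : Type) : Type := N ⊕ List (N × List Γ)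

abbrev Sym (N Γ : Type) : Type := Γ ⊕ Marker N Γ

def embedStack (x : N × List Γ) : Label N Γ × List (Sym N Γ) :=
  (.inl x.1, x.2.map .inl)

def embed (c : Q × List (N × List Γ)) : Q × List (Label N Γ × List (Sym N Γ)) :=
  (c.1, c.2.map embedStack)

def strip (γ : List (Sym N Γ)) : List Γ :=
  γ.filterMap Sum.getLeft?

def decodeStack : Label N Γ × List (Sym N Γ) → List (N × List Γ)
  | (.inl Y, γ) =>
      match γ.getLast? with
      | some (.inr (Ψr, βr, Ψ')) => Ψr ++ [(Y, strip γ.dropLast ++ βr)] ++ Ψ'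
      | _ => [(Y, strip γ)]
  | (.inr Ψr, _) => Ψr

def decode (c : Q × List (Label N Γ × List (Sym N Γ))) : Q × List (N × List Γ) :=
  (c.1, c.2.flatMap decodeStack)

/-- Inserts the inner stacks `Ψ` one at a time below the top inner stack, whose label and top
symbol `f Ψr` record the inner stacks `Ψr` still to be inserted. -/
def insertBelow (q : Q) (f : List (N × List Γ) → Label N Γ × Sym N Γ) :
    List (N × List Γ) → List (ETrans Q (Label N Γ) T (Sym N Γ))
  | [] => []
  | v :: Ψr =>
      .repl q (f (v :: Ψr)).1 [(f (v :: Ψr)).2] none q [embedStack v] (f Ψr).1 [(f Ψr).2] [] ::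
        insertBelow q f Ψr

def pushSymbols (q : Q) (Y : N) (Ψ' : List (N × List Γ)) :
    List Γ → List (ETrans Q (Label N Γ) T (Sym N Γ))
  | [] => []
  | b :: βr =>
      .repl q (.inl Y) [.inr ([], b :: βr, Ψ')] none q [] (.inl Y)
          [.inl b, .inr ([], βr, Ψ')] [] ::
        pushSymbols q Y Ψ' βr

def binarizeTrans (S : Γ) : ETrans Q N T Γ → List (ETrans Q (Label N Γ) T (Sym N Γ))
  | .popT p X β a q => [.popT p (.inl X) (β.map .inl) a q]
  | .repl p X β a q Ψ Y β' Ψ' =>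
      .repl p (.inl X) (β.map .inl) a q [] (.inl Y) [.inr (Ψ, β', Ψ')] [] ::
        (insertBelow q (fun Ψr => (.inl Y, .inr (Ψr, β', Ψ'))) Ψ ++
          pushSymbols q Y Ψ' β' ++
          .repl q (.inl Y) [.inr ([], [], Ψ')] none q [] (.inl Y) [] [(.inr Ψ', [.inl S])] ::
          insertBelow q (fun Ψr => (.inr Ψr, .inl S)) Ψ' ++
          [.popT q (.inr []) [.inl S] none q])

def binarize [One A] (M : WEPDA Q N T Γ A) (S : Γ) (S₀ : N) :
    WEPDA Q (Label N Γ) T (Sym N Γ) A where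
  trans := M.trans.flatMap (binarizeTrans S)
  wt _ := 1
  qInit := M.qInit
  stackInit := [(.inl S₀, [.inl S])]
  qFin := M.qFin
  stackFin := []

section Lift

variable {M' : WEPDA Q (Label N Γ) T (Sym N Γ) A}
  {d : Q × List (Label N Γ × List (Sym N Γ))} {w : List T}

theorem reaches_of_silent {t : ETrans Q (Label N Γ) T (Sym N Γ)}
    {c c' : Q × List (Label N Γ × List (Sym N Γ))} (ht : t ∈ M'.trans)
    (hf : t.Fires c none c') (h : M'.Reaches c' d w) : M'.Reaches c d w :=
  Reaches.head ht hf h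

theorem reaches_insertBelow (q : Q) (f : List (N × List Γ) → Label N Γ × Sym N Γ)
    (τ : List (Sym N Γ)) (Ψr : List (N × List Γ)) (F : List (Label N Γ × List (Sym N Γ)))
    (hsub : insertBelow q f Ψr ⊆ M'.trans)
    (h : M'.Reaches (q, F ++ Ψr.map embedStack ++ [((f []).1, τ ++ [(f []).2])]) d w) :
    M'.Reaches (q, F ++ [((f Ψr).1, τ ++ [(f Ψr).2])]) d w := by
  induction Ψr generalizing F with
  | nil => simpa using h
  | cons v Ψr ih =>
      have hrest := ih (F ++ [embedStack v]) (fun t ht => hsub (by simp [insertBelow, ht]))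
        (by simpa using h)
      refine reaches_of_silent (hsub List.mem_cons_self)
        (.repl F τ q _ _ none q [embedStack v] (f Ψr).1 [(f Ψr).2] []) ?_
      simpa using hrest

theorem reaches_pushSymbols (q : Q) (Y : N) (Ψ' : List (N × List Γ)) (βr : List Γ)
    (F : List (Label N Γ × List (Sym N Γ))) (τ : List (Sym N Γ))
    (hsub : pushSymbols q Y Ψ' βr ⊆ M'.trans)
    (h : M'.Reaches (q, F ++ [(.inl Y, τ ++ βr.map .inl ++ [.inr ([], [], Ψ')])]) d w) :
    M'.Reaches (q, F ++ [(.inl Y, τ ++ [.inr ([], βr, Ψ')])]) d w := by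
  induction βr generalizing τ with
  | nil => simpa using h
  | cons b βr ih =>
      have hrest := ih (τ ++ [.inl b]) (fun t ht => hsub (by simp [pushSymbols, ht]))
        (by simpa using h)
      refine reaches_of_silent (hsub List.mem_cons_self)
        (.repl F τ q _ _ none q [] (.inl Y) [.inl b, .inr ([], βr, Ψ')] []) ?_
      simpa using hrest

theorem reaches_binarizeTrans (S : Γ) {t : ETrans Q N T Γ} {c c' : Q × List (N × List Γ)}
    {a : Option T} (hsub : binarizeTrans S t ⊆ M'.trans) (hf : t.Fires c a c')
    (h : M'.Reaches (embed c') d w) :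
    M'.Reaches (embed c) d (a.toList ++ w) := by
  cases hf with
  | popT Φ p X β a q =>
      simpa [embed, embedStack] using
        Reaches.head (hsub (by simp [binarizeTrans])) (.popT (Φ.map embedStack) p _ _ a q) h
  | repl Φ σ p X β a q Ψ Y β' Ψ' =>
      set F := Φ.map embedStack
      set τ : List (Sym N Γ) := σ.map .inl
      set G := F ++ Ψ.map embedStack
      have hClose : M'.Reaches (q, G ++ [(.inl Y, τ ++ β'.map .inl)] ++ Ψ'.map embedStack ++
          [(.inr [], [] ++ [.inl S])]) d w :=
        reaches_of_silent (hsub (by simp [binarizeTrans])) (.popT _ q _ _ none q)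
          (by simpa [embed, embedStack, G, F, τ] using h)
      have hInsertAbove := reaches_insertBelow q (fun Ψr => (.inr Ψr, .inl S)) [] Ψ' _
        (fun t ht => hsub (by simp [binarizeTrans, ht])) hClose
      have hOpen : M'.Reaches
          (q, G ++ [(.inl Y, (τ ++ β'.map .inl) ++ [.inr ([], [], Ψ')])]) d w :=
        reaches_of_silent (hsub (by simp [binarizeTrans]))
          (.repl G _ q _ _ none q [] (.inl Y) [] [(.inr Ψ', [.inl S])])
          (by simpa using hInsertAbove)
      have hPush := reaches_pushSymbols q Y Ψ' β' G τ
        (fun t ht => hsub (by simp [binarizeTrans, ht])) (by simpa using hOpen)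
      have hInsert := reaches_insertBelow q (fun Ψr => (.inl Y, .inr (Ψr, β', Ψ'))) τ Ψ F
        (fun t ht => hsub (by simp [binarizeTrans, ht])) (by simpa [G] using hPush)
      simpa [embed, embedStack] using
        Reaches.head (hsub (by simp [binarizeTrans]))
          (.repl F τ p _ _ a q [] (.inl Y) [.inr (Ψ, β', Ψ')] []) (by simpa using hInsert)

end Lift

theorem reaches_binarize [One A] {M : WEPDA Q N T Γ A} (S : Γ) (S₀ : N)
    {c d : Q × List (N × List Γ)} {w : List T} (h : M.Reaches c d w) :
    (binarize M S S₀).Reaches (embed c) (embed d) w :=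
  h.head_induction_on (P := fun c w => (binarize M S S₀).Reaches (embed c) (embed d) w)
    (Reaches.refl _) fun t ht _ _ _ _ hf ih =>
      reaches_binarizeTrans S (fun _ h' => List.mem_flatMap.mpr ⟨t, ht, h'⟩) hf ih

@[simp]
theorem strip_map_inl (β : List Γ) : strip (β.map (.inl : Γ → Sym N Γ)) = β := by
  simp [strip, List.filterMap_map, Function.comp_def]

@[simp]
theorem strip_nil : strip ([] : List (Sym N Γ)) = [] := rfl

@[simp]
theorem strip_append (γ δ : List (Sym N Γ)) : strip (γ ++ δ) = strip γ ++ strip δ :=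
  List.filterMap_append

@[simp]
theorem strip_inl_cons (b : Γ) (γ : List (Sym N Γ)) : strip (.inl b :: γ) = b :: strip γ := rfl

@[simp]
theorem decodeStack_inl_concat_inr (Y : N) (σ : List (Sym N Γ)) (m : Marker N Γ) :
    decodeStack (.inl Y, σ ++ [.inr m]) = m.1 ++ [(Y, strip σ ++ m.2.1)] ++ m.2.2 := by
  simp [decodeStack]

@[simp]
theorem decodeStack_inr (Ψr : List (N × List Γ)) (γ : List (Sym N Γ)) :
    decodeStack (.inr Ψr, γ) = Ψr := rfl

theorem decodeStack_inl_of_forall_not_mem {Y : N} {γ : List (Sym N Γ)}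
    (hγ : ∀ m : Marker N Γ, .inr m ∉ γ) :
    decodeStack (.inl Y, γ) = [(Y, strip γ)] := by
  simp only [decodeStack]
  split
  · next h => exact (hγ _ (List.mem_of_getLast? h)).elim
  · rfl

@[simp]
theorem decodeStack_inl_map_inl (X : N) (β : List Γ) :
    decodeStack (.inl X, β.map (.inl : Γ → Sym N Γ)) = [(X, β)] := by
  rw [decodeStack_inl_of_forall_not_mem (by simp), strip_map_inl]

@[simp]
theorem decodeStack_embedStack (x : N × List Γ) : decodeStack (embedStack x) = [x] :=
  decodeStack_inl_map_inl x.1 x.2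

@[simp]
theorem decode_embed (c : Q × List (N × List Γ)) : decode (embed c) = c := by
  simp [decode, embed, List.flatMap_map]

def MarkersOnTop (Φ : List (Label N Γ × List (Sym N Γ))) : Prop :=
  ∀ x ∈ Φ, ∀ m : Marker N Γ, .inr m ∉ x.2.dropLast

@[simp]
theorem markersOnTop_append {Φ Ψ : List (Label N Γ × List (Sym N Γ))} :
    MarkersOnTop (Φ ++ Ψ) ↔ MarkersOnTop Φ ∧ MarkersOnTop Ψ := by
  simp only [MarkersOnTop, List.mem_append, or_imp, forall_and]

@[simp]
theorem markersOnTop_cons {x : Label N Γ × List (Sym N Γ)}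
    {Φ : List (Label N Γ × List (Sym N Γ))} :
    MarkersOnTop (x :: Φ) ↔
      (∀ m : Marker N Γ, .inr m ∉ x.2.dropLast) ∧ MarkersOnTop Φ := by
  simp [MarkersOnTop]

@[simp]
theorem markersOnTop_nil : MarkersOnTop ([] : List (Label N Γ × List (Sym N Γ))) := by
  simp [MarkersOnTop]

@[simp]
theorem inr_not_mem_dropLast_embedStack (x : N × List Γ) (m : Marker N Γ) :
    .inr m ∉ (embedStack x).2.dropLast := by
  simp [embedStack, ← List.map_dropLast]

@[simp]
theorem markersOnTop_map_embedStack (Φ : List (N × List Γ)) :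
    MarkersOnTop (Φ.map embedStack) :=
  fun _ hx m => by
    obtain ⟨y, -, rfl⟩ := List.mem_map.mp hx
    exact inr_not_mem_dropLast_embedStack y m

def IsSilent (t : ETrans Q (Label N Γ) T (Sym N Γ)) : Prop :=
  ∀ ⦃c a c'⦄, t.Fires c a c' → MarkersOnTop c.2 →
    MarkersOnTop c'.2 ∧ a = none ∧ decode c' = decode c

theorem isSilent_of_mem_insertBelow {q : Q} {f : List (N × List Γ) → Label N Γ × Sym N Γ}
    {g : List (Sym N Γ) → List (N × List Γ)}
    (hf : ∀ Ψr σ, decodeStack ((f Ψr).1, σ ++ [(f Ψr).2]) = Ψr ++ g σ)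
    {Ψ : List (N × List Γ)} {t : ETrans Q (Label N Γ) T (Sym N Γ)}
    (ht : t ∈ insertBelow q f Ψ) : IsSilent t := by
  induction Ψ with
  | nil => simp [insertBelow] at ht
  | cons v Ψr ih =>
      rcases List.mem_cons.mp ht with rfl | ht
      · rintro _ _ _ ⟨Φ, σ⟩ hc
        refine ⟨?_, rfl, ?_⟩
        · simp_all
        · simp [decode, hf]
      · exact ih ht

theorem isSilent_of_mem_pushSymbols {q : Q} {Y : N} {Ψ' : List (N × List Γ)} {β : List Γ}
    {t : ETrans Q (Label N Γ) T (Sym N Γ)} (ht : t ∈ pushSymbols q Y Ψ' β) : IsSilent t := by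
  induction β with
  | nil => simp [pushSymbols] at ht
  | cons b βr ih =>
      rcases List.mem_cons.mp ht with rfl | ht
      · rintro _ _ _ ⟨Φ, σ⟩ hc
        refine ⟨?_, rfl, ?_⟩
        · simp_all
        · have := decodeStack_inl_concat_inr Y (σ ++ [.inl b]) ([], βr, Ψ')
          simp_all [decode]
      · exact ih ht

theorem isSilent_openTemporary (S : Γ) (q : Q) (Y : N) (Ψ' : List (N × List Γ)) :
    IsSilent (T := T)
      (.repl q (.inl Y) [.inr ([], [], Ψ')] none q [] (.inl Y) [] [(.inr Ψ', [.inl S])]) := by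
  rintro _ _ _ ⟨Φ, σ⟩ hc
  simp only [markersOnTop_append, markersOnTop_cons, List.dropLast_concat] at hc
  have hσ : ∀ m : Marker N Γ, .inr m ∉ σ.dropLast := fun m hm =>
    hc.2.1 m (List.dropLast_subset _ hm)
  refine ⟨by simp_all, rfl, ?_⟩
  simp [decode, decodeStack_inl_of_forall_not_mem hc.2.1]

theorem isSilent_closeTemporary (S : Γ) (q : Q) :
    IsSilent (T := T) (.popT q (.inr [] : Label N Γ) [.inl S] none q) := by
  rintro _ _ _ ⟨Φ⟩ hc
  exact ⟨by simp_all, rfl, by simp [decode]⟩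

def Simulates (t' : ETrans Q (Label N Γ) T (Sym N Γ)) (t : ETrans Q N T Γ) : Prop :=
  ∀ ⦃c a c'⦄, t'.Fires c a c' → MarkersOnTop c.2 →
    MarkersOnTop c'.2 ∧ t.Fires (decode c) a (decode c')

theorem simulates_popT (p : Q) (X : N) (β : List Γ) (a : Option T) (q : Q) :
    Simulates (.popT p (.inl X) (β.map .inl) a q) (.popT p X β a q) := by
  intro _ _ _ hf hc
  cases hf with
  | popT Φ =>
    refine ⟨by simp_all, ?_⟩
    simpa [decode] using ETrans.Fires.popT (Φ.flatMap decodeStack) p X β a q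

theorem simulates_repl {p : Q} {X : N} {β : List Γ} (hβ : β ≠ []) (a : Option T) (q : Q)
    (Ψ : List (N × List Γ)) (Y : N) (β' : List Γ) (Ψ' : List (N × List Γ)) :
    Simulates (.repl p (.inl X) (β.map .inl) a q [] (.inl Y) [.inr (Ψ, β', Ψ')] [])
      (.repl p X β a q Ψ Y β' Ψ') := by
  rintro _ _ _ ⟨Φ, σ⟩ hc
  replace hβ : β.map (.inl : Γ → Sym N Γ) ≠ [] := by simpa using hβ
  simp only [markersOnTop_append, markersOnTop_cons, markersOnTop_nil,
    List.dropLast_append_of_ne_nil hβ] at hc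
  obtain ⟨hΦ, hσβ, -⟩ := hc
  have hσ : ∀ m : Marker N Γ, .inr m ∉ σ := fun m hm => hσβ m (List.mem_append_left _ hm)
  refine ⟨by simp [hΦ, hσ], ?_⟩
  have hσβ' : ∀ m : Marker N Γ, .inr m ∉ σ ++ β.map .inl := by simp [hσ]
  simpa [decode, decodeStack_inl_of_forall_not_mem hσβ']
    using ETrans.Fires.repl (Φ.flatMap decodeStack) (strip σ) p X β a q Ψ Y β' Ψ'

theorem isSilent_or_simulates_of_mem_binarizeTrans (S : Γ) {t : ETrans Q N T Γ}
    (hpop : t.PopsNonempty) {t' : ETrans Q (Label N Γ) T (Sym N Γ)}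
    (ht' : t' ∈ binarizeTrans S t) : IsSilent t' ∨ Simulates t' t := by
  cases t with
  | popT p X β a q => exact .inr (List.mem_singleton.mp ht' ▸ simulates_popT p X β a q)
  | repl p X β a q Ψ Y β' Ψ' =>
      simp only [binarizeTrans, List.mem_cons, List.mem_append, List.not_mem_nil, or_false] at ht'
      rcases ht' with rfl | ((hInsert | hPush) | rfl | hInsertAbove) | rfl
      · exact .inr (simulates_repl hpop a q Ψ Y β' Ψ')
      · exact .inl (isSilent_of_mem_insertBelow (g := fun σ => [(Y, strip σ ++ β')] ++ Ψ')
          (by simp) hInsert)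
      · exact .inl (isSilent_of_mem_pushSymbols hPush)
      · exact .inl (isSilent_openTemporary S q Y Ψ')
      · exact .inl (isSilent_of_mem_insertBelow (g := fun _ => []) (by simp) hInsertAbove)
      · exact .inl (isSilent_closeTemporary S q)

theorem reaches_decode_of_reaches_binarize [One A] {M : WEPDA Q N T Γ A} (S : Γ) (S₀ : N)
    (hpop : ∀ t ∈ M.trans, t.PopsNonempty) {c d : Q × List (Label N Γ × List (Sym N Γ))}
    {w : List T} (h : (binarize M S S₀).Reaches c d w) (hc : MarkersOnTop c.2) :
    M.Reaches (decode c) (decode d) w := by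
  refine h.head_induction_on
    (P := fun c w => MarkersOnTop c.2 → M.Reaches (decode c) (decode d) w)
    (fun _ => Reaches.refl _) (fun t' ht' _ _ _ _ hf ih hc => ?_) hc
  obtain ⟨t, ht, ht'⟩ := List.mem_flatMap.mp ht'
  rcases isSilent_or_simulates_of_mem_binarizeTrans S (hpop t ht) ht' with hs | hs
  · obtain ⟨hc', rfl, hdec⟩ := hs hf hc
    simpa [hdec] using ih hc'
  · obtain ⟨hc', hfire⟩ := hs hf hc
    exact Reaches.head ht hfire (ih hc')

theorem isBinarized_of_mem_insertBelow {S : Γ} {q : Q}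
    {f : List (N × List Γ) → Label N Γ × Sym N Γ} {Ψ : List (N × List Γ)}
    (hΨ : ∀ v ∈ Ψ, v.2 = [S]) {t : ETrans Q (Label N Γ) T (Sym N Γ)}
    (ht : t ∈ insertBelow q f Ψ) : t.IsBinarized (.inl S) := by
  induction Ψ with
  | nil => simp [insertBelow] at ht
  | cons v Ψr ih =>
      rcases List.mem_cons.mp ht with rfl | ht
      · refine Or.inl ⟨q, (f (v :: Ψr)).1, (f (v :: Ψr)).2, none, q, .inl v.1, (f Ψr).1,
          [(f Ψr).2], by simp, ?_⟩
        simp [embedStack, hΨ v List.mem_cons_self]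
      · exact ih (fun v hv => hΨ v (List.mem_cons_of_mem _ hv)) ht

theorem isBinarized_of_mem_pushSymbols {S : Γ} {q : Q} {Y : N} {Ψ' : List (N × List Γ)}
    {β : List Γ} {t : ETrans Q (Label N Γ) T (Sym N Γ)} (ht : t ∈ pushSymbols q Y Ψ' β) :
    t.IsBinarized (.inl S) := by
  induction β with
  | nil => simp [pushSymbols] at ht
  | cons b βr ih =>
      rcases List.mem_cons.mp ht with rfl | ht
      · exact Or.inr (Or.inr (Or.inl ⟨q, _, _, none, q, _, _, by simp, rfl⟩))
      · exact ih ht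

theorem isBinarized_of_mem_binarizeTrans {S : Γ} {t : ETrans Q N T Γ} (ht : t.IsTopDown S)
    {t' : ETrans Q (Label N Γ) T (Sym N Γ)} (ht' : t' ∈ binarizeTrans S t) :
    t'.IsBinarized (.inl S) := by
  rcases ht with ⟨p, X, A', a, q, Ψ, Y, β, Ψ', rfl, hΨ, hΨ'⟩ | ⟨p, X, A', a, q, rfl⟩
  · simp only [binarizeTrans, List.mem_cons, List.mem_append, List.not_mem_nil, or_false] at ht'
    rcases ht' with rfl | ((hInsert | hPush) | rfl | hInsertAbove) | rfl
    · exact Or.inr (Or.inr (Or.inl ⟨p, _, _, a, q, _, _, by simp, rfl⟩))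
    · exact isBinarized_of_mem_insertBelow hΨ hInsert
    · exact isBinarized_of_mem_pushSymbols hPush
    · exact Or.inr (Or.inl ⟨q, _, _, none, q, _, _, [], by simp, rfl⟩)
    · exact isBinarized_of_mem_insertBelow hΨ' hInsertAbove
    · exact Or.inr (Or.inr (Or.inr ⟨q, _, _, none, q, rfl⟩))
  · obtain rfl := List.mem_singleton.mp ht'
    exact Or.inr (Or.inr (Or.inr ⟨p, _, _, a, q, rfl⟩))

theorem isBinarizedTopDown_binarize [One A] {M : WEPDA Q N T Γ A} {S : Γ} (S₀ : N)
    (hM : ∀ t ∈ M.trans, t.IsTopDown S) :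
    (binarize M S S₀).IsBinarizedTopDown (.inl S) (.inl S₀) := by
  refine ⟨rfl, rfl, fun t' ht' => ?_⟩
  obtain ⟨t, ht, ht'⟩ := List.mem_flatMap.mp ht'
  exact isBinarized_of_mem_binarizeTrans (hM t ht) ht'

theorem language_binarize [One A] {M : WEPDA Q N T Γ A} {S : Γ} {S₀ : N}
    (hinit : M.stackInit = [(S₀, [S])]) (hfin : M.stackFin = [])
    (hpop : ∀ t ∈ M.trans, t.PopsNonempty) :
    (binarize M S S₀).language = M.language := by
  have hstart : ((binarize M S S₀).qInit, (binarize M S S₀).stackInit) =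
      embed (M.qInit, M.stackInit) := by
    rw [hinit]; rfl
  have hend : ((binarize M S S₀).qFin, (binarize M S S₀).stackFin) =
      embed (M.qFin, M.stackFin) := by
    rw [hfin]; rfl
  ext w
  change (binarize M S S₀).Reaches _ _ w ↔ M.Reaches _ _ w
  rw [hstart, hend]
  refine ⟨fun h => ?_, reaches_binarize S S₀⟩
  simpa using reaches_decode_of_reaches_binarize S S₀ hpop h (by simp [embed])

end Binarize

/-- Every top-down WEPDA is weakly equivalent to a binarized top-down
WEPDA. -/
theorem every_topDown_wepda_weakly_equivalent_to_binarized
    {Q N T Γ A : Type} [Semiring A] (M : WEPDA Q N T Γ A) (hM : M.IsTopDown) :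
    ∃ (Q' N' Γ' : Type) (M' : WEPDA Q' N' T Γ' A) (S : Γ') (S₀ : N'),
      WEPDA.IsBinarizedTopDown S S₀ M' ∧ M'.language = M.language := by
  obtain ⟨S, S₀, hinit, hfin, htd⟩ := hM
  exact ⟨_, _, _, Binarize.binarize M S S₀, _, _, Binarize.isBinarizedTopDown_binarize S₀ htd,
    Binarize.language_binarize hinit hfin fun t ht => ETrans.IsTopDown.popsNonempty (htd t ht)⟩

end CtrlForm
end
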